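/- arXiv:2502.19221 — 6 statements merged into one kernel-verified Lean document; each statement's English description precedes it below -/
import Mathlib

section
/- If h : ℝ → ℝ is smooth (at least C^5) near x_i and f_j denotes the cell average (1/Δx)∫_{x_j - Δx/2}^{x_j + Δx/2} h(ξ)dξ for j = i-1, i, i+1, i+2, then -(1/12)f_{i-1} + (7/12)f_i + (7/12)f_{i+1} - (1/12)f_{i+2} = h(x_{i+1/2}) - (1/30)h^{(4)}(x_i)Δx^4 + O(Δx^5) as Δx → 0. -/
/-!
The primitive `H x = ∫_{x_i}^x h` is `C⁶` near `x_i` with `H⁽ᵏ⁺¹⁾(x_i) = h⁽ᵏ⁾(x_i)`, and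
`Δx · f_j = H(x_j + Δx/2) - H(x_j - Δx/2)`. Expanding `H` to fifth order at the five cell
interfaces and `h` to fourth order at `x_{i+1/2}`, the weights `(-1, 7, 7, -1)/12` reproduce
`Δx · (h(x_{i+1/2}) - h⁽⁴⁾(x_i) Δx⁴/30)` exactly on the Taylor polynomials, so that
`Δx` times the error is a combination of Taylor remainders, all `O(Δx⁶)`.
-/

open Asymptotics intervalIntegral

/-- Cell average of `h` over the cell of width `Δx` centered at `x`. -/
noncomputable def cellAvg (h : ℝ → ℝ) (Δx x : ℝ) : ℝ :=
  (1 / Δx) * ∫ ξ in (x - Δx / 2)..(x + Δx / 2), h ξ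

open Filter Metric Set MeasureTheory
open scoped Nat Topology

section Taylor

variable {E : Type*} [NormedAddCommGroup E] [NormedSpace ℝ E] {f : ℝ → E} {a : ℝ} {n : ℕ}

theorem ContDiffAt.exists_contDiffOn_ball (hf : ContDiffAt ℝ n f a) :
    ∃ ε > 0, ContDiffOn ℝ n f (ball a ε) := by
  obtain ⟨u, hu, hfu⟩ := hf.contDiffOn le_rfl (by simp)
  obtain ⟨ε, hε, hball⟩ := Metric.mem_nhds_iff.1 hu
  exact ⟨ε, hε, hfu.mono hball⟩

theorem ContDiffAt.isBigO_sub_taylorWithinEval (hf : ContDiffAt ℝ (n + 1) f a) :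
    (fun x => f x - taylorWithinEval f n univ a x) =O[𝓝 a] fun x => (x - a) ^ (n + 1) := by
  obtain ⟨ε, hε, hfε⟩ := hf.exists_contDiffOn_ball
  have ha : a ∈ ball a ε := mem_ball_self hε
  have hlittle := taylor_isLittleO (convex_ball a ε) ha hfε
  rw [nhdsWithin_eq_nhds.2 (isOpen_ball.mem_nhds ha)] at hlittle
  have hlast : (fun x => (((n + 1)! : ℝ)⁻¹ * (x - a) ^ (n + 1)) • iteratedDeriv (n + 1) f a)
      =O[𝓝 a] fun x => (x - a) ^ (n + 1) :=
    .of_bound (((n + 1)! : ℝ)⁻¹ * ‖iteratedDeriv (n + 1) f a‖) <| .of_forall fun x => by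
      rw [norm_smul, norm_mul, norm_inv, RCLike.norm_natCast, mul_right_comm]
  refine (hlittle.isBigO.add hlast).congr_left fun x => ?_
  simp only [taylor_within_apply, Finset.sum_range_succ (n := n + 1),
    iteratedDerivWithin_of_isOpen isOpen_ball ha, iteratedDerivWithin_univ]
  abel

theorem ContDiffAt.isBigO_sub_taylorWithinEval_comp_mul (hf : ContDiffAt ℝ (n + 1) f a) (c : ℝ) :
    (fun t => f (a + c * t) - taylorWithinEval f n univ a (a + c * t)) =O[𝓝 0]
      fun t => t ^ (n + 1) := by
  have hmap : Tendsto (fun t => a + c * t) (𝓝 0) (𝓝 a) :=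
    Continuous.tendsto' (by fun_prop) 0 a (by simp)
  refine (hf.isBigO_sub_taylorWithinEval.comp_tendsto hmap).trans ?_
  simpa [Function.comp_def, mul_pow] using
    isBigO_const_mul_self (c ^ (n + 1)) (fun t : ℝ => t ^ (n + 1)) (𝓝 0)

end Taylor

section Primitive

variable {E : Type*} [NormedAddCommGroup E] {f : ℝ → E} {a ε : ℝ}

theorem ContinuousOn.intervalIntegrable_of_mem_ball (hf : ContinuousOn f (ball a ε)) {x : ℝ}
    (hx : x ∈ ball a ε) : IntervalIntegrable f volume a x :=
  (hf.mono ((convex_ball a ε).ordConnected.uIcc_subset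
    (mem_ball_self (pos_of_mem_ball hx)) hx)).intervalIntegrable

variable [NormedSpace ℝ E] [CompleteSpace E]

theorem ContinuousOn.hasDerivAt_integral_of_mem_ball (hf : ContinuousOn f (ball a ε)) {x : ℝ}
    (hx : x ∈ ball a ε) : HasDerivAt (fun y => ∫ t in a..y, f t) (f x) x :=
  integral_hasDerivAt_right (hf.intervalIntegrable_of_mem_ball hx)
    (hf.stronglyMeasurableAtFilter isOpen_ball x hx) (hf.continuousAt (isOpen_ball.mem_nhds hx))

theorem ContinuousOn.iteratedDeriv_succ_integral (hf : ContinuousOn f (ball a ε)) (hε : 0 < ε)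
    (k : ℕ) : iteratedDeriv (k + 1) (fun x => ∫ t in a..x, f t) a = iteratedDeriv k f a := by
  have hderiv : deriv (fun x => ∫ t in a..x, f t) =ᶠ[𝓝 a] f :=
    eventually_of_mem (ball_mem_nhds a hε) fun x hx =>
      (hf.hasDerivAt_integral_of_mem_ball hx).deriv
  rw [iteratedDeriv_succ', hderiv.iteratedDeriv_eq]

theorem ContDiffAt.contDiffAt_integral {n : ℕ} (hf : ContDiffAt ℝ n f a) :
    ContDiffAt ℝ (n + 1) (fun x => ∫ t in a..x, f t) a := by
  obtain ⟨ε, hε, hfε⟩ := hf.exists_contDiffOn_ball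
  have hderiv (x) (hx : x ∈ ball a ε) := hfε.continuousOn.hasDerivAt_integral_of_mem_ball hx
  have : ContDiffOn ℝ (n + 1) (fun x => ∫ t in a..x, f t) (ball a ε) :=
    (contDiffOn_succ_iff_deriv_of_isOpen isOpen_ball).2
      ⟨fun x hx => (hderiv x hx).differentiableAt.differentiableWithinAt, by simp,
        hfε.congr fun x hx => (hderiv x hx).deriv⟩
  exact this.contDiffAt (ball_mem_nhds a hε)

end Primitive

theorem mul_cellAvg (h : ℝ → ℝ) (Δx x : ℝ) :
    Δx * cellAvg h Δx x = ∫ ξ in (x - Δx / 2)..(x + Δx / 2), h ξ := by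
  rcases eq_or_ne Δx 0 with rfl | hΔx
  · simp
  · rw [cellAvg, ← mul_assoc, mul_one_div_cancel hΔx, one_mul]

theorem eventually_mul_cellAvg_eq_sub {h : ℝ → ℝ} {a ε : ℝ} (hε : 0 < ε)
    (hh : ContinuousOn h (ball a ε)) (c : ℝ) :
    ∀ᶠ Δx in 𝓝 0, Δx * cellAvg h Δx (a + c * Δx) =
      (∫ t in a..(a + c * Δx + Δx / 2), h t) - ∫ t in a..(a + c * Δx - Δx / 2), h t := by
  have hnear {g : ℝ → ℝ} (hg : Continuous g) (hg0 : g 0 = a) : ∀ᶠ Δx in 𝓝 0, g Δx ∈ ball a ε :=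
    hg.tendsto' 0 a hg0 |>.eventually (ball_mem_nhds a hε)
  filter_upwards [hnear (g := fun Δx => a + c * Δx + Δx / 2) (by fun_prop) (by simp),
    hnear (g := fun Δx => a + c * Δx - Δx / 2) (by fun_prop) (by simp)] with Δx hright hleft
  rw [mul_cellAvg, integral_interval_sub_left (hh.intervalIntegrable_of_mem_ball hright)
    (hh.intervalIntegrable_of_mem_ball hleft)]

theorem isBigO_pow_of_mul_isBigO_pow_succ {f : ℝ → ℝ} {n : ℕ}
    (hf : (fun t => t * f t) =O[𝓝 0] fun t => t ^ (n + 1)) :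
    f =O[𝓝[≠] 0] fun t => t ^ n := by
  have := (isBigO_refl (fun t : ℝ => t⁻¹) (𝓝[≠] 0)).mul (hf.mono nhdsWithin_le_nhds)
  refine this.congr' ?_ ?_ <;> filter_upwards [self_mem_nhdsWithin] with t (ht : t ≠ 0)
  · field_simp
  · rw [pow_succ']
    field_simp

theorem stmt_2 (h : ℝ → ℝ) (xi : ℝ) (hh : ContDiffAt ℝ 5 h xi) :
    (fun Δx : ℝ =>
        (-(1/12) * cellAvg h Δx (xi - Δx) + (7/12) * cellAvg h Δx xi +
          (7/12) * cellAvg h Δx (xi + Δx) - (1/12) * cellAvg h Δx (xi + 2 * Δx)) -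
        (h (xi + Δx / 2) - (1/30) * iteratedDeriv 4 h xi * Δx ^ 4))
      =O[nhdsWithin (0:ℝ) (Set.Ioi 0)] (fun Δx : ℝ => Δx ^ 5) := by
  obtain ⟨ε, hε, hhε⟩ := (hh : ContDiffAt ℝ (5 : ℕ) h xi).exists_contDiffOn_ball
  set H : ℝ → ℝ := fun x => ∫ t in xi..x, h t
  set R : ℝ → ℝ → ℝ := fun c Δx => H (xi + c * Δx) - taylorWithinEval H 5 univ xi (xi + c * Δx)
  set r : ℝ → ℝ := fun Δx => h (xi + 1 / 2 * Δx) - taylorWithinEval h 4 univ xi (xi + 1 / 2 * Δx)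
  have hcell_rem (c : ℝ) :
      (fun Δx => R (c + 1 / 2) Δx - R (c - 1 / 2) Δx) =O[𝓝 0] fun Δx => Δx ^ 6 :=
    (hh.contDiffAt_integral.isBigO_sub_taylorWithinEval_comp_mul _).sub
      (hh.contDiffAt_integral.isBigO_sub_taylorWithinEval_comp_mul _)
  have hΔr : (fun Δx => Δx * r Δx) =O[𝓝 0] fun Δx => Δx ^ 6 :=
    ((isBigO_refl (fun Δx : ℝ => Δx) _).mul ((hh : ContDiffAt ℝ (4 + 1 : ℕ) h xi)
      |>.isBigO_sub_taylorWithinEval_comp_mul _)).congr_right fun Δx => by ring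
  have hcell := eventually_mul_cellAvg_eq_sub hε hhε.continuousOn
  refine (isBigO_pow_of_mul_isBigO_pow_succ ?_).mono (nhdsWithin_mono _ fun x hx => ne_of_gt hx)
  refine EventuallyEq.trans_isBigO ?_ (((((hcell_rem (-1)).const_mul_left (-(1 / 12))).add
    ((hcell_rem 0).const_mul_left (7 / 12))).add ((hcell_rem 1).const_mul_left (7 / 12))).sub
    ((hcell_rem 2).const_mul_left (1 / 12)) |>.sub hΔr)
  filter_upwards [hcell (-1), hcell 0, hcell 1, hcell 2] with Δx h₁ h₂ h₃ h₄
  simp only [H, R, r, taylor_within_apply, iteratedDerivWithin_univ, Finset.sum_range_succ',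
    hhε.continuousOn.iteratedDeriv_succ_integral hε, Finset.sum_range_zero, Nat.factorial,
    smul_eq_mul]
  linear_combination (norm := ring_nf) (-(1/12)) * h₁ + 7/12 * h₂ + 7/12 * h₃ - 1/12 * h₄
end

section
/- Let f : ℝ → ℝ be smooth near x_i, and define β_0 = (f(x_i - Δx) - f(x_i))^2 and β_1 = (f(x_i) - f(x_i + Δx))^2. Then as Δx → 0: β_0 = f'(x_i)^2 Δx^2 - f'(x_i)f''(x_i)Δx^3 + ((1/4)f''(x_i)^2 + (1/3)f'(x_i)f'''(x_i))Δx^4 + O(Δx^5), and β_1 = f'(x_i)^2 Δx^2 + f'(x_i)f''(x_i)Δx^3 + ((1/4)f''(x_i)^2 + (1/3)f'(x_i)f'''(x_i))Δx^4 + O(Δx^5). -/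
open Asymptotics

open Asymptotics Filter Set
open scoped ContDiff

lemma taylor_key (n : ℕ) : ∀ (f : ℝ → ℝ) (s : Set ℝ), IsOpen s → ∀ xi ∈ s,
    ContDiffOn ℝ ((n + 1 : ℕ) : WithTop ℕ∞) f s →
    (fun h : ℝ => f (xi + h) -
        ∑ k ∈ Finset.range (n + 1), iteratedDeriv k f xi / (Nat.factorial k) * h ^ k)
      =O[nhds (0:ℝ)] fun h => h ^ (n + 1) := by
  induction n with
  | zero =>
    intro f s hs xi hxi hf
    have hd : DifferentiableAt ℝ f xi :=
      (hf.differentiableOn (by simp) xi hxi).differentiableAt (hs.mem_nhds hxi)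
    have h1 : (fun x' => f x' - f xi) =O[nhds xi] fun x' => x' - xi :=
      hd.hasFDerivAt.isBigO_sub
    have ht : Filter.Tendsto (fun h : ℝ => xi + h) (nhds 0) (nhds xi) := by
      have : Filter.Tendsto (fun h : ℝ => xi + h) (nhds 0) (nhds (xi + 0)) :=
        tendsto_const_nhds.add tendsto_id
      simpa using this
    have h2 := h1.comp_tendsto ht
    simp only [Function.comp_def] at h2
    have h3 : (fun h : ℝ => xi + h - xi) = fun h : ℝ => h := by funext h; ring
    rw [h3] at h2
    refine h2.congr (fun h => ?_) (fun h => by ring)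
    simp [Finset.sum_range_one]
  | succ n IH =>
    intro f s hs xi hxi hf
    set g := deriv f with hg_def
    have hg : ContDiffOn ℝ ((n + 1 : ℕ) : WithTop ℕ∞) g s :=
      hf.deriv_of_isOpen hs (by exact_mod_cast (le_refl (n + 1 + 1)))
    have hIH := IH g s hs xi hxi hg
    set c : ℕ → ℝ := fun k => iteratedDeriv k f xi / (Nat.factorial k) with hc
    set R : ℝ → ℝ := fun h => f (xi + h) - ∑ k ∈ Finset.range (n + 2), c k * h ^ k with hR
    set D : ℝ → ℝ := fun h => g (xi + h) -
        ∑ k ∈ Finset.range (n + 1), iteratedDeriv k g xi / (Nat.factorial k) * h ^ k with hD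
    have hderiv : ∀ x : ℝ, xi + x ∈ s → HasDerivAt R (D x) x := by
      intro x hx
      have hfd : HasDerivAt f (g (xi + x)) (xi + x) :=
        ((hf.differentiableOn (by simp) _ hx).differentiableAt (hs.mem_nhds hx)).hasDerivAt
      have h1 : HasDerivAt (fun h : ℝ => f (xi + h)) (g (xi + x)) x :=
        hfd.comp_const_add xi x
      have h2 : HasDerivAt (fun h : ℝ => ∑ k ∈ Finset.range (n + 2), c k * h ^ k)
          (∑ k ∈ Finset.range (n + 2), c k * (k * x ^ (k - 1))) x :=
        HasDerivAt.fun_sum fun k _ => (hasDerivAt_pow k x).const_mul (c k)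
      have hsum : (∑ k ∈ Finset.range (n + 2), c k * (k * x ^ (k - 1)))
          = ∑ k ∈ Finset.range (n + 1), iteratedDeriv k g xi / (Nat.factorial k) * x ^ k := by
        rw [Finset.sum_range_succ']
        simp only [Nat.cast_zero, zero_mul, mul_zero, add_zero]
        refine Finset.sum_congr rfl fun k _ => ?_
        have hck : c (k + 1) = iteratedDeriv k g xi / (Nat.factorial (k + 1)) := by
          rw [hc]
          simp only [iteratedDeriv_succ', hg_def]
        rw [hck]
        have hfac : ((Nat.factorial (k + 1) : ℝ)) = (k + 1) * (Nat.factorial k) := by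
          push_cast [Nat.factorial_succ]; ring
        have hk0 : ((Nat.factorial k : ℝ)) ≠ 0 := Nat.cast_ne_zero.mpr (Nat.factorial_ne_zero k)
        have hk1 : ((k : ℝ) + 1) ≠ 0 := by positivity
        rw [hfac]
        simp only [Nat.add_sub_cancel, Nat.cast_add, Nat.cast_one]
        field_simp
      rw [hsum] at h2
      exact h1.sub h2
    rw [isBigO_iff] at hIH
    obtain ⟨C, hC⟩ := hIH
    have hs' : ∀ᶠ x : ℝ in nhds 0, xi + x ∈ s := by
      have : Filter.Tendsto (fun h : ℝ => xi + h) (nhds 0) (nhds xi) := by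
        have : Filter.Tendsto (fun h : ℝ => xi + h) (nhds 0) (nhds (xi + 0)) :=
          tendsto_const_nhds.add tendsto_id
        simpa using this
      exact this.eventually_mem (hs.mem_nhds hxi)
    have hboth := hC.and hs'
    rw [Metric.eventually_nhds_iff] at hboth
    obtain ⟨ε, hε, hball⟩ := hboth
    rw [isBigO_iff]
    refine ⟨|C|, ?_⟩
    rw [Metric.eventually_nhds_iff]
    refine ⟨ε, hε, fun h hh => ?_⟩
    simp only [dist_zero_right, Real.norm_eq_abs] at hh ⊢
    -- bound on uIcc 0 h
    have hmem : ∀ x ∈ uIcc (0:ℝ) h, |x| ≤ |h| := by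
      intro x hx
      rw [Set.mem_uIcc] at hx
      rcases hx with ⟨h1, h2⟩ | ⟨h1, h2⟩
      · rw [abs_le]; constructor
        · linarith [neg_abs_le h, abs_nonneg h, le_abs_self h]
        · exact h2.trans (le_abs_self h)
      · rw [abs_le]; constructor
        · linarith [neg_abs_le h]
        · linarith [abs_nonneg h]
    have key : ∀ x ∈ uIcc (0:ℝ) h, ‖D x‖ ≤ |C| * |h| ^ (n + 1) := by
      intro x hx
      have hxlt : dist x 0 < ε := by
        rw [dist_zero_right, Real.norm_eq_abs]
        exact lt_of_le_of_lt (hmem x hx) hh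
      obtain ⟨hb, _⟩ := hball hxlt
      calc ‖D x‖ ≤ C * ‖x ^ (n+1)‖ := hb
        _ ≤ |C| * |x| ^ (n + 1) := by
            rw [Real.norm_eq_abs, abs_pow]
            exact mul_le_mul_of_nonneg_right (le_abs_self C) (by positivity)
        _ ≤ |C| * |h| ^ (n + 1) := by
            apply mul_le_mul_of_nonneg_left _ (abs_nonneg C)
            exact pow_le_pow_left₀ (abs_nonneg x) (hmem x hx) _
    have hRd : ∀ x ∈ uIcc (0:ℝ) h, HasDerivWithinAt R (D x) (uIcc (0:ℝ) h) x := by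
      intro x hx
      have hxlt : dist x 0 < ε := by
        rw [dist_zero_right, Real.norm_eq_abs]
        exact lt_of_le_of_lt (hmem x hx) hh
      exact (hderiv x (hball hxlt).2).hasDerivWithinAt
    have hmvt := Convex.norm_image_sub_le_of_norm_hasDerivWithin_le hRd key
      (convex_uIcc 0 h) (left_mem_uIcc) (right_mem_uIcc)
    have hR0 : R 0 = 0 := by
      rw [hR]
      simp only [add_zero]
      rw [Finset.sum_eq_single_of_mem 0 (Finset.mem_range.mpr (by omega))]
      · simp [hc]
      · intro k _ hk
        simp [zero_pow hk]
    rw [hR0, sub_zero, sub_zero, Real.norm_eq_abs, Real.norm_eq_abs] at hmvt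
    calc |R h| ≤ |C| * |h| ^ (n + 1) * |h| := hmvt
      _ = |C| * |h ^ (n + 1 + 1)| := by rw [abs_pow]; ring

lemma expand_key (f : ℝ → ℝ) (xi : ℝ) (hf : ContDiffAt ℝ (⊤ : ℕ∞) f xi) :
    (fun h : ℝ =>
        (f (xi + h) - f xi) ^ 2 -
          (deriv f xi ^ 2 * h ^ 2 + deriv f xi * iteratedDeriv 2 f xi * h ^ 3 +
            ((1/4) * iteratedDeriv 2 f xi ^ 2 +
              (1/3) * deriv f xi * iteratedDeriv 3 f xi) * h ^ 4))
      =O[nhds (0:ℝ)] fun h : ℝ => h ^ 5 := by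
  obtain ⟨u, hu, hcd⟩ := hf.contDiffOn (m := ((3 + 1 : ℕ) : WithTop ℕ∞)) (WithTop.coe_le_coe.mpr le_top) (by simp)
  obtain ⟨s, hsu, hs, hxis⟩ := mem_nhds_iff.mp hu
  have hT := taylor_key 3 f s hs xi hxis (hcd.mono hsu)
  set a := deriv f xi with ha
  set b := iteratedDeriv 2 f xi / 2 with hb
  set d := iteratedDeriv 3 f xi / 6 with hd
  have hsum : ∀ h : ℝ, (∑ k ∈ Finset.range (3 + 1), iteratedDeriv k f xi / (Nat.factorial k) * h ^ k)
      = f xi + a * h + b * h ^ 2 + d * h ^ 3 := by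
    intro h
    rw [Finset.sum_range_succ, Finset.sum_range_succ, Finset.sum_range_succ,
      Finset.sum_range_one]
    simp [iteratedDeriv_zero, iteratedDeriv_one, Nat.factorial, ha, hb, hd]
  set r : ℝ → ℝ := fun h => f (xi + h) - (f xi + a * h + b * h ^ 2 + d * h ^ 3) with hr
  have hrO : r =O[nhds (0:ℝ)] fun h : ℝ => h ^ 4 := by
    refine hT.congr (fun h => ?_) (fun h => rfl)
    rw [hsum h]
  -- decompose the target
  have hdecomp : (fun h : ℝ =>
        (f (xi + h) - f xi) ^ 2 -
          (deriv f xi ^ 2 * h ^ 2 + deriv f xi * iteratedDeriv 2 f xi * h ^ 3 +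
            ((1/4) * iteratedDeriv 2 f xi ^ 2 +
              (1/3) * deriv f xi * iteratedDeriv 3 f xi) * h ^ 4))
      = fun h : ℝ => (h ^ 5 * (2 * b * d + d ^ 2 * h)
          + (h * (2 * a + 2 * b * h + 2 * d * h ^ 2)) * r h + r h * r h) := by
    funext h
    have hfh : f (xi + h) = r h + (f xi + a * h + b * h ^ 2 + d * h ^ 3) := by
      rw [hr]; ring
    rw [hfh, ha]
    have h2 : iteratedDeriv 2 f xi = 2 * b := by rw [hb]; ring
    have h3 : iteratedDeriv 3 f xi = 6 * d := by rw [hd]; ring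
    rw [h2, h3]
    ring
  rw [hdecomp]
  have p1 : (fun h : ℝ => h ^ 5 * (2 * b * d + d ^ 2 * h)) =O[nhds (0:ℝ)] fun h : ℝ => h ^ 5 := by
    have hb1 : (fun h : ℝ => 2 * b * d + d ^ 2 * h) =O[nhds (0:ℝ)] fun _ : ℝ => (1:ℝ) := by
      have : Filter.Tendsto (fun h : ℝ => 2 * b * d + d ^ 2 * h) (nhds 0) (nhds (2 * b * d + d ^ 2 * 0)) := by
        exact tendsto_const_nhds.add (tendsto_const_nhds.mul tendsto_id)
      exact this.isBigO_one ℝ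
    have := (isBigO_refl (fun h : ℝ => h ^ 5) (nhds 0)).mul hb1
    refine this.trans ?_
    apply Asymptotics.isBigO_of_le
    intro x; simp
  have p2 : (fun h : ℝ => (h * (2 * a + 2 * b * h + 2 * d * h ^ 2)) * r h)
      =O[nhds (0:ℝ)] fun h : ℝ => h ^ 5 := by
    have hb1 : (fun h : ℝ => 2 * a + 2 * b * h + 2 * d * h ^ 2) =O[nhds (0:ℝ)] fun _ : ℝ => (1:ℝ) := by
      have : Filter.Tendsto (fun h : ℝ => 2 * a + 2 * b * h + 2 * d * h ^ 2) (nhds 0)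
          (nhds (2 * a + 2 * b * 0 + 2 * d * 0 ^ 2)) := by
        exact (tendsto_const_nhds.add (tendsto_const_nhds.mul tendsto_id)).add
          (tendsto_const_nhds.mul (tendsto_id.pow 2))
      exact this.isBigO_one ℝ
    have hfirst := (isBigO_refl (fun h : ℝ => h) (nhds 0)).mul hb1
    have := (hfirst.mul hrO)
    refine this.trans ?_
    apply Asymptotics.isBigO_of_le
    intro x
    have : x * 1 * x ^ 4 = x ^ 5 := by ring
    rw [this]
  have p3 : (fun h : ℝ => r h * r h) =O[nhds (0:ℝ)] fun h : ℝ => h ^ 5 := by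
    have := hrO.mul hrO
    refine this.trans ?_
    have hb1 : (fun h : ℝ => h ^ 3) =O[nhds (0:ℝ)] fun _ : ℝ => (1:ℝ) := by
      have : Filter.Tendsto (fun h : ℝ => h ^ 3) (nhds 0) (nhds (0 ^ 3)) := tendsto_id.pow 3
      exact this.isBigO_one ℝ
    have := (isBigO_refl (fun h : ℝ => h ^ 5) (nhds 0)).mul hb1
    refine (Asymptotics.isBigO_of_le _ fun x => ?_).trans (this.trans (Asymptotics.isBigO_of_le _ fun x => by simp))
    have : x ^ 4 * x ^ 4 = x ^ 5 * x ^ 3 := by ring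
    rw [this]
  exact (p1.add p2).add p3


theorem stmt_3 (f : ℝ → ℝ) (xi : ℝ) (hf : ContDiffAt ℝ (⊤ : ℕ∞) f xi) :
    ((fun Δx : ℝ =>
        (f (xi - Δx) - f xi) ^ 2 -
          (deriv f xi ^ 2 * Δx ^ 2 - deriv f xi * iteratedDeriv 2 f xi * Δx ^ 3 +
            ((1/4) * iteratedDeriv 2 f xi ^ 2 +
              (1/3) * deriv f xi * iteratedDeriv 3 f xi) * Δx ^ 4))
      =O[nhds (0:ℝ)] (fun Δx : ℝ => Δx ^ 5)) ∧
    ((fun Δx : ℝ =>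
        (f xi - f (xi + Δx)) ^ 2 -
          (deriv f xi ^ 2 * Δx ^ 2 + deriv f xi * iteratedDeriv 2 f xi * Δx ^ 3 +
            ((1/4) * iteratedDeriv 2 f xi ^ 2 +
              (1/3) * deriv f xi * iteratedDeriv 3 f xi) * Δx ^ 4))
      =O[nhds (0:ℝ)] (fun Δx : ℝ => Δx ^ 5)) := by
  have hL := expand_key f xi hf
  constructor
  · have hneg : Filter.Tendsto (fun Δx : ℝ => -Δx) (nhds 0) (nhds (0:ℝ)) := by
      have : Filter.Tendsto (fun Δx : ℝ => -Δx) (nhds 0) (nhds (-0 : ℝ)) := tendsto_id.neg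
      simpa using this
    have h1 := hL.comp_tendsto hneg
    simp only [Function.comp_def] at h1
    have h2 : (fun Δx : ℝ => (-Δx) ^ 5) =O[nhds (0:ℝ)] fun Δx : ℝ => Δx ^ 5 := by
      apply Asymptotics.isBigO_of_le
      intro x
      rw [Real.norm_eq_abs, Real.norm_eq_abs, abs_pow, abs_pow, abs_neg]
    have h3 := h1.trans h2
    refine h3.congr (fun Δx => ?_) (fun _ => rfl)
    simp only [← sub_eq_add_neg]
    ring
  · refine hL.congr (fun Δx => ?_) (fun _ => rfl)
    ring
end

section
/- Let f : ℝ → ℝ be smooth near x_i, and define β_2 = (1/3)[(f(x_i-Δx)-f(x_i))^2 + (f(x_i)-f(x_i+Δx))^2 + (f(x_i+Δx)-f(x_i+2Δx))^2]. Then β_2 = f'(x_i)^2 Δx^2 + f'(x_i)f''(x_i)Δx^3 + ((11/12)f''(x_i)^2 + f'(x_i)f'''(x_i))Δx^4 + O(Δx^5) as Δx → 0. -/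
open Asymptotics Filter Set Finset Topology

/-- MVT step: if `h 0 = 0` and `deriv h = O(t^n)` near `0` (with `h` differentiable near `0`),
then `h = O(t^(n+1))`. -/
lemma mvt_step {h : ℝ → ℝ} {n : ℕ} (hdiff : ∀ᶠ t in 𝓝 (0:ℝ), DifferentiableAt ℝ h t)
    (h0 : h 0 = 0) (hO : (deriv h) =O[𝓝 (0:ℝ)] fun t => t ^ n) :
    h =O[𝓝 (0:ℝ)] fun t => t ^ (n + 1) := by
  rcases hO.exists_pos with ⟨C, hCpos, hC⟩
  obtain ⟨ε, hε, hball⟩ := Metric.eventually_nhds_iff_ball.mp (hC.bound.and hdiff)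
  rw [isBigO_iff]
  refine ⟨C, ?_⟩
  rw [Metric.eventually_nhds_iff_ball]
  refine ⟨ε, hε, fun t ht => ?_⟩
  have htabs : |t| < ε := by simpa [Real.dist_eq] using ht
  have hsub : Set.uIcc (0:ℝ) t ⊆ Metric.ball (0:ℝ) ε := by
    intro s hs
    rw [Set.mem_uIcc] at hs
    have : |s| ≤ |t| := by
      rcases hs with ⟨h1, h2⟩ | ⟨h1, h2⟩
      · rw [abs_of_nonneg h1]; exact le_trans h2 (le_abs_self t)
      · rw [abs_of_nonpos h2]; exact le_trans (neg_le_neg h1) (neg_le_abs t)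
    simpa [Real.dist_eq] using lt_of_le_of_lt this htabs
  have hbd : ∀ s ∈ Set.uIcc (0:ℝ) t, ‖deriv h s‖ ≤ C * |t| ^ n := by
    intro s hs
    have h1 := (hball s (hsub hs)).1
    have habs : |s| ≤ |t| := by
      have hs' := Set.mem_uIcc.mp hs
      rcases hs' with ⟨h1', h2⟩ | ⟨h1', h2⟩
      · rw [abs_of_nonneg h1']; exact le_trans h2 (le_abs_self t)
      · rw [abs_of_nonpos h2]; exact le_trans (neg_le_neg h1') (neg_le_abs t)
    calc ‖deriv h s‖ ≤ C * ‖s ^ n‖ := h1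
      _ = C * |s| ^ n := by rw [Real.norm_eq_abs, abs_pow]
      _ ≤ C * |t| ^ n := by gcongr
  have key := Convex.norm_image_sub_le_of_norm_deriv_le
    (fun s hs => (hball s (hsub hs)).2) hbd (convex_uIcc _ _)
    Set.left_mem_uIcc Set.right_mem_uIcc
  calc ‖h t‖ = ‖h t - h 0‖ := by rw [h0, sub_zero]
    _ ≤ C * |t| ^ n * ‖t - 0‖ := key
    _ = C * ‖t ^ (n + 1)‖ := by
        rw [sub_zero, Real.norm_eq_abs, Real.norm_eq_abs, abs_pow, pow_succ]; ring

/-- Taylor expansion with big-O remainder for functions `C^n` on an open set containing `0`. -/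
lemma taylor_isBigO : ∀ (n : ℕ) (g : ℝ → ℝ) (s : Set ℝ), IsOpen s → (0:ℝ) ∈ s →
    ContDiffOn ℝ n g s →
    (fun t => g t - ∑ k ∈ Finset.range n, iteratedDeriv k g 0 / (k.factorial : ℝ) * t ^ k)
      =O[𝓝 (0:ℝ)] fun t => t ^ n := by
  intro n
  induction n with
  | zero =>
    intro g s hs h0 hg
    simp only [Finset.range_zero, Finset.sum_empty, sub_zero, pow_zero]
    have hcont : ContinuousAt g 0 :=
      (hg.continuousOn.continuousAt (hs.mem_nhds h0))
    exact hcont.isBigO_one ℝ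
  | succ n IH =>
    intro g s hs h0 hg
    have hgdiff : DifferentiableOn ℝ g s := hg.differentiableOn (by simp)
    have hderiv : ContDiffOn ℝ n (deriv g) s :=
      hg.deriv_of_isOpen hs (by exact_mod_cast le_refl (n+1))
    have IH' := IH (deriv g) s hs h0 hderiv
    set h : ℝ → ℝ := fun t =>
      g t - ∑ k ∈ Finset.range (n+1), iteratedDeriv k g 0 / (k.factorial : ℝ) * t ^ k with hh
    have h0' : h 0 = 0 := by
      simp only [hh, Finset.sum_range_succ']
      simp [iteratedDeriv_zero]
    have hdiff : ∀ᶠ t in 𝓝 (0:ℝ), DifferentiableAt ℝ h t := by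
      filter_upwards [hs.mem_nhds h0] with t ht
      exact ((hgdiff t ht).differentiableAt (hs.mem_nhds ht)).sub (by fun_prop)
    have hderiv_h : ∀ᶠ t in 𝓝 (0:ℝ), deriv h t =
        deriv g t - ∑ k ∈ Finset.range n, iteratedDeriv k (deriv g) 0 / (k.factorial : ℝ) * t ^ k := by
      filter_upwards [hs.mem_nhds h0] with t ht
      have hgd : DifferentiableAt ℝ g t := (hgdiff t ht).differentiableAt (hs.mem_nhds ht)
      have hp : HasDerivAt (fun t : ℝ =>
          ∑ k ∈ Finset.range (n+1), iteratedDeriv k g 0 / (k.factorial : ℝ) * t ^ k)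
          (∑ k ∈ Finset.range (n+1), iteratedDeriv k g 0 / (k.factorial : ℝ) * ((k:ℝ) * t ^ (k-1))) t := by
        apply HasDerivAt.fun_sum
        intro k _
        exact (hasDerivAt_pow k t).const_mul _
      have hsum : (∑ k ∈ Finset.range (n+1), iteratedDeriv k g 0 / (k.factorial : ℝ) * ((k:ℝ) * t ^ (k-1)))
          = ∑ k ∈ Finset.range n, iteratedDeriv k (deriv g) 0 / (k.factorial : ℝ) * t ^ k := by
        rw [Finset.sum_range_succ']
        simp only [Nat.cast_zero, zero_mul, mul_zero, add_zero]
        apply Finset.sum_congr rfl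
        intro k _
        rw [← iteratedDeriv_succ']
        rw [Nat.factorial_succ]
        push_cast
        have : (k.factorial : ℝ) ≠ 0 := by exact_mod_cast k.factorial_ne_zero
        field_simp
      rw [hh]
      rw [deriv_fun_sub hgd hp.differentiableAt, hp.deriv, hsum]
    have hO : (deriv h) =O[𝓝 (0:ℝ)] fun t => t ^ n :=
      IH'.congr' (hderiv_h.mono fun t ht => ht.symm) (EventuallyEq.refl _ _)
    exact mvt_step hdiff h0' hO

theorem stmt_4 (f : ℝ → ℝ) (xi : ℝ) (hf : ContDiffAt ℝ (⊤ : ℕ∞) f xi) :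
    (fun Δx : ℝ =>
        (1/3) * ((f (xi - Δx) - f xi) ^ 2 + (f xi - f (xi + Δx)) ^ 2 +
            (f (xi + Δx) - f (xi + 2 * Δx)) ^ 2) -
          (deriv f xi ^ 2 * Δx ^ 2 + deriv f xi * iteratedDeriv 2 f xi * Δx ^ 3 +
            ((11/12) * iteratedDeriv 2 f xi ^ 2 +
              deriv f xi * iteratedDeriv 3 f xi) * Δx ^ 4))
      =O[nhds (0:ℝ)] (fun Δx : ℝ => Δx ^ 5) := by
  obtain ⟨u, hu_mem, hu⟩ := hf.contDiffOn (m := 5) (by exact WithTop.coe_le_coe.mpr (le_top : (5:ℕ∞) ≤ ⊤)) (by simp)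
  have hs : IsOpen (interior u) := isOpen_interior
  have hxi : xi ∈ interior u := mem_interior_iff_mem_nhds.mpr hu_mem
  have hus : ContDiffOn ℝ 5 f (interior u) := hu.mono interior_subset
  set s' : Set ℝ := (fun t : ℝ => xi + t) ⁻¹' (interior u) with hs'def
  have hs' : IsOpen s' := hs.preimage (by fun_prop)
  have h0' : (0:ℝ) ∈ s' := by simp [hs'def, hxi]
  have hg : ContDiffOn ℝ 5 (fun t => f (xi + t)) s' :=
    ContDiffOn.comp hus ((contDiff_const.add contDiff_id).contDiffOn) (fun t ht => ht)
  have hr0 := taylor_isBigO 5 (fun t => f (xi + t)) s' hs' h0' hg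
  have hid : ∀ k, iteratedDeriv k (fun t => f (xi + t)) 0 = iteratedDeriv k f xi := by
    intro k; rw [iteratedDeriv_comp_const_add]; simp
  set c1 := deriv f xi with hc1
  set c2 := iteratedDeriv 2 f xi with hc2
  set c3 := iteratedDeriv 3 f xi with hc3
  set c4 := iteratedDeriv 4 f xi with hc4
  set r : ℝ → ℝ := fun t => f (xi + t) -
      (f xi + c1*t + c2/2*t^2 + c3/6*t^3 + c4/24*t^4) with hrdef
  have hr : r =O[𝓝 (0:ℝ)] fun t => t^5 := by
    refine hr0.congr' (Eventually.of_forall fun t => ?_) (EventuallyEq.refl _ _)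
    simp only [Finset.sum_range_succ, Finset.sum_range_zero, hid, hrdef]
    rw [iteratedDeriv_zero, iteratedDeriv_one, ← hc1, ← hc2, ← hc3, ← hc4]
    norm_num [Nat.factorial]
  have hrn : (fun t => r (-t)) =O[𝓝 (0:ℝ)] fun t => t^5 := by
    have hten : Tendsto (fun t : ℝ => -t) (𝓝 0) (𝓝 0) := by
      simpa using (tendsto_id (x := 𝓝 (0:ℝ))).neg
    refine (hr.comp_tendsto hten).trans (isBigO_of_le _ fun t => ?_)
    simp [abs_pow]
  have hr2 : (fun t => r (2*t)) =O[𝓝 (0:ℝ)] fun t => t^5 := by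
    have hten : Tendsto (fun t : ℝ => 2*t) (𝓝 0) (𝓝 0) := by
      simpa using (tendsto_id (x := 𝓝 (0:ℝ))).const_mul (2:ℝ)
    refine (hr.comp_tendsto hten).trans (isBigO_of_le' (c := 32) _ fun t => ?_)
    simp only [Function.comp, mul_pow, Real.norm_eq_abs, abs_mul, abs_pow]
    norm_num
  have hcr : ContinuousAt r 0 := by
    have h1 : ContinuousAt (fun t : ℝ => f (xi + t)) 0 :=
      hg.continuousOn.continuousAt (hs'.mem_nhds h0')
    exact h1.sub (Continuous.continuousAt (by fun_prop))
  have hcrn : ContinuousAt (fun t : ℝ => r (-t)) 0 := by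
    have h1 : ContinuousAt r (-(0:ℝ)) := by simpa using hcr
    exact ContinuousAt.comp h1 continuous_neg.continuousAt
  have hcr2 : ContinuousAt (fun t : ℝ => r (2*t)) 0 := by
    have h1 : ContinuousAt r (2*(0:ℝ)) := by simpa using hcr
    exact ContinuousAt.comp h1 (continuous_const.mul continuous_id).continuousAt
  set Q : ℝ → ℝ := fun t => 5/12*c1*c4 + 7/6*c2*c3 + (47/72*c2*c4 + 17/36*c3^2)*t
      + 35/72*c3*c4*t^2 + 227/1728*c4^2*t^3 with hQdef
  set F2 : ℝ → ℝ := fun t => 2/3*(c1*(-t) + c2/2*(-t)^2 + c3/6*(-t)^3 + c4/24*(-t)^4)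
      + 1/3 * r (-t) with hF2def
  set F3 : ℝ → ℝ := fun t => 2/3*(c1*t + c2/2*t^2 + c3/6*t^3 + c4/24*t^4)
      + 1/3 * r t with hF3def
  set F4 : ℝ → ℝ := fun t => 2/3*((c1*t + c2/2*t^2 + c3/6*t^3 + c4/24*t^4)
      - (c1*(2*t) + c2/2*(2*t)^2 + c3/6*(2*t)^3 + c4/24*(2*t)^4))
      + 1/3 * (r t - r (2*t)) with hF4def
  have hfun : (fun Δx : ℝ =>
        (1/3) * ((f (xi - Δx) - f xi) ^ 2 + (f xi - f (xi + Δx)) ^ 2 +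
            (f (xi + Δx) - f (xi + 2 * Δx)) ^ 2) -
          (c1 ^ 2 * Δx ^ 2 + c1 * c2 * Δx ^ 3 +
            ((11/12) * c2 ^ 2 + c1 * c3) * Δx ^ 4))
      = fun t => t^5 * Q t + F2 t * r (-t) + F3 t * r t + F4 t * (r t - r (2*t)) := by
    funext t
    rw [show xi - t = xi + -t by ring]
    simp only [hQdef, hF2def, hF3def, hF4def, hrdef]
    ring
  rw [hfun]
  have hQ1 : Q =O[𝓝 (0:ℝ)] (fun _ => (1:ℝ)) :=
    ((Continuous.continuousAt (by fun_prop) : ContinuousAt Q 0)).isBigO_one ℝ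
  have hF2O : F2 =O[𝓝 (0:ℝ)] (fun _ => (1:ℝ)) := by
    have h : ContinuousAt F2 0 := (Continuous.continuousAt (by fun_prop)).add (continuousAt_const.mul hcrn)
    exact h.isBigO_one ℝ
  have hF3O : F3 =O[𝓝 (0:ℝ)] (fun _ => (1:ℝ)) := by
    have h : ContinuousAt F3 0 := (Continuous.continuousAt (by fun_prop)).add (continuousAt_const.mul hcr)
    exact h.isBigO_one ℝ
  have hF4O : F4 =O[𝓝 (0:ℝ)] (fun _ => (1:ℝ)) := by
    have h : ContinuousAt F4 0 := (Continuous.continuousAt (by fun_prop)).add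
      (continuousAt_const.mul (hcr.sub hcr2))
    exact h.isBigO_one ℝ
  have p1 : (fun t : ℝ => t^5 * Q t) =O[𝓝 (0:ℝ)] fun t => t^5 := by
    simpa using (isBigO_refl (fun t : ℝ => t^5) (𝓝 (0:ℝ))).mul hQ1
  have p2 : (fun t : ℝ => F2 t * r (-t)) =O[𝓝 (0:ℝ)] fun t => t^5 := by
    simpa using hF2O.mul hrn
  have p3 : (fun t : ℝ => F3 t * r t) =O[𝓝 (0:ℝ)] fun t => t^5 := by
    simpa using hF3O.mul hr
  have p4 : (fun t : ℝ => F4 t * (r t - r (2*t))) =O[𝓝 (0:ℝ)] fun t => t^5 := by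
    simpa using hF4O.mul (hr.sub hr2)
  exact ((p1.add p2).add p3).add p4
end

section
/- Let f : ℝ → ℝ be smooth near x_i and define β_4 by the formula (1/9)(f_{i-1}-f_i-f_{i+1}+f_{i+2})^2 + (44299/103680)(f_{i-1}-3f_i+3f_{i+1}-f_{i+2})^2 + (31/57600)(f_{i-1}-15f_i+15f_{i+1}-f_{i+2})^2 + (1/2304)(13f_{i-1}+29f_i-61f_{i+1}+19f_{i+2})^2 + (1/2304)(61f_{i-1}-151f_i+119f_{i+1}-29f_{i+2})^2 + (1/32400)(41f_{i-1}-15f_i+15f_{i+1}-41f_{i+2})^2, where f_j = f(x_i + (j-i)Δx). Then β_4 = f'(x_i)^2 Δx^2 + (13/12)f''(x_i)^2 Δx^4 + O(Δx^5) as Δx → 0. -/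
open Asymptotics
open scoped ContDiff

/-- Smoothness indicator of the whole 4-point stencil. -/
noncomputable def beta4 (fm1 f0 f1 f2 : ℝ) : ℝ :=
  (1/9) * (fm1 - f0 - f1 + f2) ^ 2 +
    (44299/103680) * (fm1 - 3 * f0 + 3 * f1 - f2) ^ 2 +
    (31/57600) * (fm1 - 15 * f0 + 15 * f1 - f2) ^ 2 +
    (1/2304) * (13 * fm1 + 29 * f0 - 61 * f1 + 19 * f2) ^ 2 +
    (1/2304) * (61 * fm1 - 151 * f0 + 119 * f1 - 29 * f2) ^ 2 +
    (1/32400) * (41 * fm1 - 15 * f0 + 15 * f1 - 41 * f2) ^ 2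

noncomputable def E1 (a a' b c d : ℝ) : ℝ :=
  (1/9) * ((1 * a + (-1) * b + (-1) * c + 1 * d) + (1 * a' + (-1) * b + (-1) * c + 1 * d)) * (1) +
  (44299/103680) * ((1 * a + (-3) * b + 3 * c + (-1) * d) + (1 * a' + (-3) * b + 3 * c + (-1) * d)) * (1) +
  (31/57600) * ((1 * a + (-15) * b + 15 * c + (-1) * d) + (1 * a' + (-15) * b + 15 * c + (-1) * d)) * (1) +
  (1/2304) * ((13 * a + 29 * b + (-61) * c + 19 * d) + (13 * a' + 29 * b + (-61) * c + 19 * d)) * (13) +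
  (1/2304) * ((61 * a + (-151) * b + 119 * c + (-29) * d) + (61 * a' + (-151) * b + 119 * c + (-29) * d)) * (61) +
  (1/32400) * ((41 * a + (-15) * b + 15 * c + (-41) * d) + (41 * a' + (-15) * b + 15 * c + (-41) * d)) * (41)

noncomputable def E3 (a a' b c d : ℝ) : ℝ :=
  (1/9) * ((1 * b + (-1) * c + (-1) * a + 1 * d) + (1 * b + (-1) * c + (-1) * a' + 1 * d)) * (-1) +
  (44299/103680) * ((1 * b + (-3) * c + 3 * a + (-1) * d) + (1 * b + (-3) * c + 3 * a' + (-1) * d)) * (3) +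
  (31/57600) * ((1 * b + (-15) * c + 15 * a + (-1) * d) + (1 * b + (-15) * c + 15 * a' + (-1) * d)) * (15) +
  (1/2304) * ((13 * b + 29 * c + (-61) * a + 19 * d) + (13 * b + 29 * c + (-61) * a' + 19 * d)) * (-61) +
  (1/2304) * ((61 * b + (-151) * c + 119 * a + (-29) * d) + (61 * b + (-151) * c + 119 * a' + (-29) * d)) * (119) +
  (1/32400) * ((41 * b + (-15) * c + 15 * a + (-41) * d) + (41 * b + (-15) * c + 15 * a' + (-41) * d)) * (15)

noncomputable def E4 (a a' b c d : ℝ) : ℝ :=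
  (1/9) * ((1 * b + (-1) * c + (-1) * d + 1 * a) + (1 * b + (-1) * c + (-1) * d + 1 * a')) * (1) +
  (44299/103680) * ((1 * b + (-3) * c + 3 * d + (-1) * a) + (1 * b + (-3) * c + 3 * d + (-1) * a')) * (-1) +
  (31/57600) * ((1 * b + (-15) * c + 15 * d + (-1) * a) + (1 * b + (-15) * c + 15 * d + (-1) * a')) * (-1) +
  (1/2304) * ((13 * b + 29 * c + (-61) * d + 19 * a) + (13 * b + 29 * c + (-61) * d + 19 * a')) * (19) +
  (1/2304) * ((61 * b + (-151) * c + 119 * d + (-29) * a) + (61 * b + (-151) * c + 119 * d + (-29) * a')) * (-29) +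
  (1/32400) * ((41 * b + (-15) * c + 15 * d + (-41) * a) + (41 * b + (-15) * c + 15 * d + (-41) * a')) * (-41)

lemma beta4_diff1 (a a' b c d : ℝ) :
    beta4 a b c d - beta4 a' b c d = (a - a') * E1 a a' b c d := by
  unfold beta4 E1; ring

lemma beta4_diff3 (a a' b c d : ℝ) :
    beta4 b c a d - beta4 b c a' d = (a - a') * E3 a a' b c d := by
  unfold beta4 E3; ring

lemma beta4_diff4 (a a' b c d : ℝ) :
    beta4 b c d a - beta4 b c d a' = (a - a') * E4 a a' b c d := by
  unfold beta4 E4; ring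

open Filter Metric in
/-- Peano-type remainder bound for Taylor expansion, by induction. -/
lemma taylor_peano : ∀ (n : ℕ) (f : ℝ → ℝ) (ε : ℝ), 0 < ε →
    ContDiffOn ℝ ((n : WithTop ℕ∞) + 1) f (Metric.ball 0 ε) →
    (fun h : ℝ => f h - ∑ k ∈ Finset.range (n+1),
        iteratedDeriv k f 0 / (k.factorial : ℝ) * h ^ k)
      =O[nhds (0:ℝ)] fun h => h ^ (n+1) := by
  intro n
  induction n with
  | zero =>
    intro f ε hε hf
    have hfd : DifferentiableAt ℝ f 0 :=
      ((hf.differentiableOn (by simp)) 0 (Metric.mem_ball_self hε)).differentiableAt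
        (Metric.ball_mem_nhds 0 hε)
    have h1 : (fun h : ℝ => f h - f 0) =O[nhds (0:ℝ)] fun h : ℝ => h - 0 :=
      hfd.hasDerivAt.isBigO_sub
    have h2 : (fun h : ℝ => f h - f 0) =O[nhds (0:ℝ)] fun h : ℝ => h ^ 1 := by
      simpa using h1
    refine h2.congr_left fun h => ?_
    simp [Finset.sum_range_one, iteratedDeriv_zero]
  | succ n IH =>
    intro f ε hε hf
    have hballo : IsOpen (Metric.ball (0:ℝ) ε) := Metric.isOpen_ball
    obtain ⟨hfdiff, -, hdf⟩ := (contDiffOn_succ_iff_deriv_of_isOpen hballo).1 hf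
    have IH' := IH (deriv f) ε hε (by simpa using hdf)
    set c : ℕ → ℝ := fun k => iteratedDeriv k f 0 / (k.factorial : ℝ) with hc
    set g : ℝ → ℝ := fun h => f h - ∑ k ∈ Finset.range (n+2), c k * h ^ k with hgdef
    set dr : ℝ → ℝ := fun t => deriv f t - ∑ k ∈ Finset.range (n+1),
        iteratedDeriv k (deriv f) 0 / (k.factorial : ℝ) * t ^ k with hdrdef
    have hg' : ∀ t ∈ Metric.ball (0:ℝ) ε, HasDerivAt g (dr t) t := by
      intro t ht
      have hft : HasDerivAt f (deriv f t) t :=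
        ((hfdiff t ht).differentiableAt (hballo.mem_nhds ht)).hasDerivAt
      have hpoly : HasDerivAt (fun h : ℝ => ∑ k ∈ Finset.range (n+2), c k * h ^ k)
          (∑ k ∈ Finset.range (n+2), c k * ((k : ℝ) * t ^ (k-1))) t := by
        apply HasDerivAt.fun_sum
        intro k _
        exact (hasDerivAt_pow k t).const_mul (c k)
      have hsum : ∑ k ∈ Finset.range (n+2), c k * ((k : ℝ) * t ^ (k-1))
          = ∑ k ∈ Finset.range (n+1),
              iteratedDeriv k (deriv f) 0 / (k.factorial : ℝ) * t ^ k := by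
        rw [Finset.sum_range_succ']
        simp only [Nat.cast_zero, zero_mul, mul_zero, add_zero]
        apply Finset.sum_congr rfl
        intro k _
        have h1 : iteratedDeriv (k+1) f 0 = iteratedDeriv k (deriv f) 0 := by
          rw [iteratedDeriv_succ']
        simp only [hc, h1, Nat.add_sub_cancel, Nat.factorial_succ]
        have hkf : ((k.factorial : ℝ)) ≠ 0 := Nat.cast_ne_zero.2 k.factorial_ne_zero
        have hk1 : ((k:ℝ) + 1) ≠ 0 := by positivity
        push_cast
        field_simp
      have := hft.sub hpoly
      rw [hsum] at this
      exact this
    have hg0 : g 0 = 0 := by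
      simp only [hgdef, Finset.sum_range_succ']
      simp [hc, iteratedDeriv_zero]
    rw [Asymptotics.isBigO_iff] at IH'
    obtain ⟨C, hC⟩ := IH'
    rw [Metric.eventually_nhds_iff] at hC
    obtain ⟨δ, hδ, hCb⟩ := hC
    rw [Asymptotics.isBigO_iff]
    refine ⟨|C|, ?_⟩
    rw [Metric.eventually_nhds_iff]
    refine ⟨min δ ε, lt_min hδ hε, ?_⟩
    intro h hh
    rw [Real.dist_eq, sub_zero] at hh
    have habs : ∀ t ∈ Set.uIcc (0:ℝ) h, |t| ≤ |h| := by
      intro t ht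
      rcases Set.mem_uIcc.1 ht with ⟨h1, h2⟩ | ⟨h1, h2⟩
      · rw [abs_of_nonneg h1]; exact h2.trans (le_abs_self h)
      · rw [abs_of_nonpos h2]; exact (neg_le_neg h1).trans (neg_le_abs h)
    have hsub : Set.uIcc (0:ℝ) h ⊆ Metric.ball 0 ε := by
      intro t ht
      rw [Metric.mem_ball, Real.dist_eq, sub_zero]
      exact lt_of_le_of_lt (habs t ht) (lt_of_lt_of_le hh (min_le_right _ _))
    have hbd : ∀ t ∈ Set.uIcc (0:ℝ) h, ‖dr t‖ ≤ |C| * |h| ^ (n+1) := by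
      intro t ht
      have hdist : dist t 0 < δ := by
        rw [Real.dist_eq, sub_zero]
        exact lt_of_le_of_lt (habs t ht) (lt_of_lt_of_le hh (min_le_left _ _))
      calc ‖dr t‖ ≤ C * ‖t ^ (n+1)‖ := hCb hdist
        _ ≤ |C| * |h| ^ (n+1) := by
            rw [Real.norm_eq_abs, abs_pow]
            have h1 : C * |t| ^ (n+1) ≤ |C| * |t| ^ (n+1) := by
              apply mul_le_mul_of_nonneg_right (le_abs_self C) (by positivity)
            refine h1.trans ?_
            apply mul_le_mul_of_nonneg_left (pow_le_pow_left₀ (abs_nonneg t) (habs t ht) _)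
              (abs_nonneg C)
    have key := Convex.norm_image_sub_le_of_norm_hasDerivWithin_le
      (f := g) (f' := dr) (s := Set.uIcc (0:ℝ) h)
      (fun t ht => (hg' t (hsub ht)).hasDerivWithinAt) hbd (convex_uIcc _ _)
      Set.left_mem_uIcc Set.right_mem_uIcc
    rw [hg0, sub_zero, sub_zero] at key
    calc ‖g h‖ ≤ |C| * |h| ^ (n+1) * ‖h‖ := key
      _ = |C| * ‖h ^ (n+1+1)‖ := by
          rw [Real.norm_eq_abs, Real.norm_eq_abs, abs_pow, pow_succ]
          ring

set_option maxHeartbeats 1000000 in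
open Filter Metric in
theorem stmt_5 (f : ℝ → ℝ) (xi : ℝ) (hf : ContDiffAt ℝ (⊤ : ℕ∞) f xi) :
    (fun Δx : ℝ =>
        beta4 (f (xi - Δx)) (f xi) (f (xi + Δx)) (f (xi + 2 * Δx)) -
          (deriv f xi ^ 2 * Δx ^ 2 + (13/12) * iteratedDeriv 2 f xi ^ 2 * Δx ^ 4))
      =O[nhds (0:ℝ)] (fun Δx : ℝ => Δx ^ 5) := by
  obtain ⟨s, hs_mem, hs⟩ := hf.contDiffOn (m := 5) (WithTop.coe_le_coe.2 le_top) (by simp)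
  obtain ⟨ε, hε, hball⟩ := Metric.mem_nhds_iff.1 hs_mem
  have hg : ContDiffOn ℝ 5 (fun h : ℝ => f (xi + h)) (Metric.ball 0 ε) := by
    apply (hs.mono hball).comp ((contDiff_const.add contDiff_id).contDiffOn)
    intro h hh
    simp only [Metric.mem_ball, Real.dist_eq, sub_zero] at hh ⊢
    simpa [add_sub_cancel_left] using hh
  have hr0 := taylor_peano 4 (fun h => f (xi + h)) ε hε (by exact_mod_cast hg)
  have hiter : ∀ k, iteratedDeriv k (fun h : ℝ => f (xi + h)) 0 = iteratedDeriv k f xi := by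
    intro k
    rw [iteratedDeriv_comp_const_add]
    simp
  set c0 := f xi with hc0
  set c1 := deriv f xi with hc1
  set c2 := iteratedDeriv 2 f xi with hc2
  set c3 := iteratedDeriv 3 f xi with hc3
  set c4 := iteratedDeriv 4 f xi with hc4
  set r : ℝ → ℝ := fun h => f (xi + h) -
      (c0 + c1 * h + c2/2 * h^2 + c3/6 * h^3 + c4/24 * h^4) with hrdef
  have hr : r =O[nhds (0:ℝ)] fun h => h ^ 5 := by
    refine hr0.congr_left fun h => ?_
    simp only [Finset.sum_range_succ, Finset.sum_range_zero, hiter]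
    rw [hrdef]
    simp only [iteratedDeriv_zero, iteratedDeriv_one, ← hc0, ← hc1, ← hc2, ← hc3, ← hc4]
    norm_num [Nat.factorial]
  -- the three remainder functions
  set Pm : ℝ → ℝ := fun Δx => c0 - c1 * Δx + c2/2 * Δx^2 - c3/6 * Δx^3 + c4/24 * Δx^4 with hPm
  set Pp : ℝ → ℝ := fun Δx => c0 + c1 * Δx + c2/2 * Δx^2 + c3/6 * Δx^3 + c4/24 * Δx^4 with hPp
  set P2 : ℝ → ℝ := fun Δx => c0 + 2*c1 * Δx + 2*c2 * Δx^2 + (4/3)*c3 * Δx^3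
      + (2/3)*c4 * Δx^4 with hP2
  have hu : (fun Δx : ℝ => f (xi - Δx) - Pm Δx) =O[nhds (0:ℝ)] fun Δx => Δx ^ 5 := by
    have hneg : Filter.Tendsto (fun Δx : ℝ => -Δx) (nhds 0) (nhds 0) := by
      simpa using (tendsto_neg (0:ℝ)).comp tendsto_id
    have h1 := hr.comp_tendsto (by simpa using hneg)
    have h2 : (r ∘ fun Δx : ℝ => -Δx) = fun Δx : ℝ => f (xi - Δx) - Pm Δx := by
      funext Δx
      show r (-Δx) = _
      simp only [hrdef, hPm]
      rw [show xi + -Δx = xi - Δx by ring]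
      ring
    rw [h2] at h1
    refine h1.trans ?_
    apply Asymptotics.isBigO_of_le
    intro x
    show ‖((-x)^5 : ℝ)‖ ≤ ‖(x^5 : ℝ)‖
    simp [abs_pow]
  have hv : (fun Δx : ℝ => f (xi + Δx) - Pp Δx) =O[nhds (0:ℝ)] fun Δx => Δx ^ 5 := by
    refine hr.congr_left fun Δx => ?_
    simp only [hrdef, hPp]
  have hw : (fun Δx : ℝ => f (xi + 2*Δx) - P2 Δx) =O[nhds (0:ℝ)] fun Δx => Δx ^ 5 := by
    have h2x : Filter.Tendsto (fun Δx : ℝ => 2*Δx) (nhds 0) (nhds 0) := by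
      have h : Filter.Tendsto (fun x : ℝ => 2*x) (nhds 0) (nhds (2*0)) :=
        ((continuous_const.mul continuous_id : Continuous fun x : ℝ => 2*x)).tendsto 0
      simpa only [mul_zero] using h
    have h1 := hr.comp_tendsto (by simpa using h2x)
    have h2 : (r ∘ fun Δx : ℝ => 2*Δx) = fun Δx : ℝ => f (xi + 2*Δx) - P2 Δx := by
      funext Δx
      show r (2*Δx) = _
      simp only [hrdef, hP2]
      ring
    rw [h2] at h1
    refine h1.trans ?_
    rw [Asymptotics.isBigO_iff]
    refine ⟨32, Filter.Eventually.of_forall fun x => ?_⟩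
    show ‖((2*x)^5 : ℝ)‖ ≤ 32 * ‖(x^5 : ℝ)‖
    simp only [Real.norm_eq_abs, abs_pow]
    rw [abs_mul]
    rw [mul_pow]
    norm_num
  -- limits
  have hcf : ContinuousAt f xi := hf.continuousAt
  have t5 : Filter.Tendsto (fun Δx : ℝ => Δx ^ 5) (nhds 0) (nhds 0) := by
    have := (continuous_pow 5 (M := ℝ)).tendsto 0
    simpa using this
  have tm1 : Filter.Tendsto (fun Δx : ℝ => f (xi - Δx)) (nhds 0) (nhds c0) := by
    apply hcf.tendsto.comp
    have : Continuous (fun Δx : ℝ => xi - Δx) := continuous_const.sub continuous_id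
    simpa using this.tendsto 0
  have t1 : Filter.Tendsto (fun Δx : ℝ => f (xi + Δx)) (nhds 0) (nhds c0) := by
    apply hcf.tendsto.comp
    have : Continuous (fun Δx : ℝ => xi + Δx) := continuous_const.add continuous_id
    simpa using this.tendsto 0
  have t2 : Filter.Tendsto (fun Δx : ℝ => f (xi + 2*Δx)) (nhds 0) (nhds c0) := by
    apply hcf.tendsto.comp
    have : Continuous (fun Δx : ℝ => xi + 2*Δx) :=
      continuous_const.add (continuous_const.mul continuous_id)
    simpa using this.tendsto 0
  have tPm : Filter.Tendsto Pm (nhds 0) (nhds c0) := by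
    have : Continuous Pm := by rw [hPm]; fun_prop
    simpa [hPm] using this.tendsto 0
  have tPp : Filter.Tendsto Pp (nhds 0) (nhds c0) := by
    have : Continuous Pp := by rw [hPp]; fun_prop
    simpa [hPp] using this.tendsto 0
  have tP2 : Filter.Tendsto P2 (nhds 0) (nhds c0) := by
    have : Continuous P2 := by rw [hP2]; fun_prop
    simpa [hP2] using this.tendsto 0
  have tc : Filter.Tendsto (fun _ : ℝ => c0) (nhds 0) (nhds c0) := tendsto_const_nhds
  -- the bounded factors
  have hcontE1 : Continuous fun p : ℝ × ℝ × ℝ × ℝ × ℝ =>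
      E1 p.1 p.2.1 p.2.2.1 p.2.2.2.1 p.2.2.2.2 := by unfold E1; fun_prop
  have hcontE3 : Continuous fun p : ℝ × ℝ × ℝ × ℝ × ℝ =>
      E3 p.1 p.2.1 p.2.2.1 p.2.2.2.1 p.2.2.2.2 := by unfold E3; fun_prop
  have hcontE4 : Continuous fun p : ℝ × ℝ × ℝ × ℝ × ℝ =>
      E4 p.1 p.2.1 p.2.2.1 p.2.2.2.1 p.2.2.2.2 := by unfold E4; fun_prop
  have hU : (fun Δx : ℝ => E1 (f (xi - Δx)) (Pm Δx) c0 (f (xi + Δx)) (f (xi + 2*Δx)))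
      =O[nhds (0:ℝ)] (fun _ => (1:ℝ)) := by
    have ht := tm1.prodMk_nhds (tPm.prodMk_nhds (tc.prodMk_nhds (t1.prodMk_nhds t2)))
    exact ((hcontE1.tendsto _).comp ht).isBigO_one ℝ
  have hV : (fun Δx : ℝ => E3 (f (xi + Δx)) (Pp Δx) (Pm Δx) c0 (f (xi + 2*Δx)))
      =O[nhds (0:ℝ)] (fun _ => (1:ℝ)) := by
    have ht := t1.prodMk_nhds (tPp.prodMk_nhds (tPm.prodMk_nhds (tc.prodMk_nhds t2)))
    exact ((hcontE3.tendsto _).comp ht).isBigO_one ℝ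
  have hW : (fun Δx : ℝ => E4 (f (xi + 2*Δx)) (P2 Δx) (Pm Δx) c0 (Pp Δx))
      =O[nhds (0:ℝ)] (fun _ => (1:ℝ)) := by
    have ht := t2.prodMk_nhds (tP2.prodMk_nhds (tPm.prodMk_nhds (tc.prodMk_nhds tPp)))
    exact ((hcontE4.tendsto _).comp ht).isBigO_one ℝ
  set G : ℝ → ℝ := fun Δx => -(1/6)*c1*c4 + ((781/720)*c3^2 + (13/72)*c2*c4)*Δx
      + (781/720)*c3*c4*Δx^2 + (617/2160)*c4^2*Δx^3 with hG
  have hGb : G =O[nhds (0:ℝ)] (fun _ => (1:ℝ)) := by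
    have : Continuous G := by rw [hG]; fun_prop
    exact (this.tendsto 0).isBigO_one ℝ
  -- assemble
  have hsum : (fun Δx : ℝ =>
      (f (xi - Δx) - Pm Δx) * E1 (f (xi - Δx)) (Pm Δx) c0 (f (xi + Δx)) (f (xi + 2*Δx))
      + (f (xi + Δx) - Pp Δx) * E3 (f (xi + Δx)) (Pp Δx) (Pm Δx) c0 (f (xi + 2*Δx))
      + (f (xi + 2*Δx) - P2 Δx) * E4 (f (xi + 2*Δx)) (P2 Δx) (Pm Δx) c0 (Pp Δx)
      + Δx ^ 5 * G Δx) =O[nhds (0:ℝ)] fun Δx => Δx ^ 5 := by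
    have h1 : (fun Δx : ℝ => (f (xi - Δx) - Pm Δx) *
        E1 (f (xi - Δx)) (Pm Δx) c0 (f (xi + Δx)) (f (xi + 2*Δx)))
        =O[nhds (0:ℝ)] fun Δx => Δx ^ 5 := by simpa using hu.mul hU
    have h2 : (fun Δx : ℝ => (f (xi + Δx) - Pp Δx) *
        E3 (f (xi + Δx)) (Pp Δx) (Pm Δx) c0 (f (xi + 2*Δx)))
        =O[nhds (0:ℝ)] fun Δx => Δx ^ 5 := by simpa using hv.mul hV
    have h3 : (fun Δx : ℝ => (f (xi + 2*Δx) - P2 Δx) *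
        E4 (f (xi + 2*Δx)) (P2 Δx) (Pm Δx) c0 (Pp Δx))
        =O[nhds (0:ℝ)] fun Δx => Δx ^ 5 := by simpa using hw.mul hW
    have h4 : (fun Δx : ℝ => Δx ^ 5 * G Δx) =O[nhds (0:ℝ)] fun Δx => Δx ^ 5 := by
      simpa using (Asymptotics.isBigO_refl (fun Δx : ℝ => Δx ^ 5) (nhds (0:ℝ))).mul hGb
    exact ((h1.add h2).add h3).add h4
  refine hsum.congr_left fun Δx => ?_
  have e1 := beta4_diff1 (f (xi - Δx)) (Pm Δx) c0 (f (xi + Δx)) (f (xi + 2*Δx))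
  have e3 := beta4_diff3 (f (xi + Δx)) (Pp Δx) (Pm Δx) c0 (f (xi + 2*Δx))
  have e4 := beta4_diff4 (f (xi + 2*Δx)) (P2 Δx) (Pm Δx) c0 (Pp Δx)
  have epoly : beta4 (Pm Δx) c0 (Pp Δx) (P2 Δx)
      - (c1 ^ 2 * Δx ^ 2 + (13/12) * c2 ^ 2 * Δx ^ 4) = Δx ^ 5 * G Δx := by
    simp only [hPm, hPp, hP2, hG]
    unfold beta4
    ring
  rw [← e1, ← e3, ← e4]
  linarith [epoly]
end

section
/- Let d_0 = 1/6, d_1 = 2/3, d_2 = 1/6 and τ > 0 fixed. Suppose β_0(Δx), β_1(Δx) are positive functions of Δx with β_0/β_1 → 1 and β_0 → 0 as Δx → 0, while β_2 is a fixed positive constant and τ/β_2 remains bounded. Then the Z-type weights ω_0^Z = α_0/(α_0+α_1+α_2), α_k = d_k(1+(τ/β_k)^2), satisfy ω_0^Z → 1/5 and ω_1^Z → 4/5 and ω_2^Z → 0 as Δx → 0. -/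
/-!
Multiplying every `α_k` by `β₀²` turns the weights into quotients of convergent quantities:
`β₀² α_k = d_k (β₀² + τ² (β₀/β_k)²) → d_k τ² r_k²` with `r₀ = r₁ = 1` and `r₂ = 0`, so the
weights tend to `d₀ / (d₀ + d₁)`, `d₁ / (d₀ + d₁)` and `0`.
-/

open Filter Topology

variable {ι : Type*} {l : Filter ι}

theorem tendsto_div_of_tendsto_mul_left {s f g : ι → ℝ} {a b : ℝ}
    (hs : ∀ᶠ x in l, s x ≠ 0) (hf : Tendsto (fun x => s x * f x) l (𝓝 a))
    (hg : Tendsto (fun x => s x * g x) l (𝓝 b)) (hb : b ≠ 0) :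
    Tendsto (fun x => f x / g x) l (𝓝 (a / b)) :=
  (hf.div hg hb).congr' (hs.mono fun _ hx => mul_div_mul_left _ _ hx)

theorem tendsto_sq_mul_one_add_div_sq {b c : ι → ℝ} {r : ℝ} (d τ : ℝ)
    (hb : Tendsto b l (𝓝 0)) (hr : Tendsto (fun x => b x / c x) l (𝓝 r)) :
    Tendsto (fun x => b x ^ 2 * (d * (1 + (τ / c x) ^ 2))) l (𝓝 (d * τ ^ 2 * r ^ 2)) := by
  have hlim : Tendsto (fun x => d * (b x ^ 2 + (τ * (b x / c x)) ^ 2)) l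
      (𝓝 (d * (0 ^ 2 + (τ * r) ^ 2))) :=
    ((hb.pow 2).add ((hr.const_mul τ).pow 2)).const_mul d
  convert hlim using 2 with x
  · ring
  · ring

theorem stmt_10_general (β0 β1 : ℝ → ℝ) (β2 τ : ℝ)
    (hpos : ∀ᶠ Δx in nhdsWithin (0:ℝ) (Set.Ioi 0), 0 < β0 Δx ∧ 0 < β1 Δx)
    (hratio : Tendsto (fun Δx => β0 Δx / β1 Δx) (nhdsWithin (0:ℝ) (Set.Ioi 0)) (nhds 1))
    (h0 : Tendsto β0 (nhdsWithin (0:ℝ) (Set.Ioi 0)) (nhds 0))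
    (hτ : 0 < τ) :
    let d0 : ℝ := 1/6; let d1 : ℝ := 2/3; let d2 : ℝ := 1/6
    let α0 : ℝ → ℝ := fun Δx => d0 * (1 + (τ / β0 Δx) ^ 2)
    let α1 : ℝ → ℝ := fun Δx => d1 * (1 + (τ / β1 Δx) ^ 2)
    let α2 : ℝ → ℝ := fun Δx => d2 * (1 + (τ / β2) ^ 2)
    Tendsto (fun Δx => α0 Δx / (α0 Δx + α1 Δx + α2 Δx))
        (nhdsWithin (0:ℝ) (Set.Ioi 0)) (nhds (1/5)) ∧
    Tendsto (fun Δx => α1 Δx / (α0 Δx + α1 Δx + α2 Δx))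
        (nhdsWithin (0:ℝ) (Set.Ioi 0)) (nhds (4/5)) ∧
    Tendsto (fun Δx => α2 Δx / (α0 Δx + α1 Δx + α2 Δx))
        (nhdsWithin (0:ℝ) (Set.Ioi 0)) (nhds 0) := by
  intro d0 d1 d2 α0 α1 α2
  have hβ0 : ∀ᶠ x in 𝓝[>] (0:ℝ), β0 x ≠ 0 := hpos.mono fun _ hx => hx.1.ne'
  have hself : Tendsto (fun x => β0 x / β0 x) (𝓝[>] 0) (𝓝 1) :=
    tendsto_const_nhds.congr' (hβ0.mono fun _ hx => (div_self hx).symm)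
  have H0 := tendsto_sq_mul_one_add_div_sq d0 τ h0 hself
  have H1 := tendsto_sq_mul_one_add_div_sq d1 τ h0 hratio
  have H2 := tendsto_sq_mul_one_add_div_sq d2 τ h0 (c := fun _ => β2) (h0.div_const β2)
  have hS : Tendsto (fun x => β0 x ^ 2 * (α0 x + α1 x + α2 x)) (𝓝[>] 0)
      (𝓝 (d0 * τ ^ 2 * 1 ^ 2 + d1 * τ ^ 2 * 1 ^ 2 + d2 * τ ^ 2 * (0 / β2) ^ 2)) := by
    refine ((H0.add H1).add H2).congr fun x => ?_
    simp only [α0, α1, α2]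
    ring
  have hs : ∀ᶠ x in 𝓝[>] (0:ℝ), β0 x ^ 2 ≠ 0 := hβ0.mono fun _ hx => pow_ne_zero 2 hx
  have hsum : d0 * τ ^ 2 * 1 ^ 2 + d1 * τ ^ 2 * 1 ^ 2 + d2 * τ ^ 2 * (0 / β2) ^ 2 ≠ 0 := by
    simp only [d0, d1, d2]
    norm_num
    positivity
  refine ⟨?_, ?_, ?_⟩
  · convert tendsto_div_of_tendsto_mul_left hs H0 hS hsum using 2
    simp only [d0, d1, d2]; field_simp; norm_num
  · convert tendsto_div_of_tendsto_mul_left hs H1 hS hsum using 2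
    simp only [d0, d1, d2]; field_simp; norm_num
  · convert tendsto_div_of_tendsto_mul_left hs H2 hS hsum using 2
    simp

theorem stmt_10 (β0 β1 : ℝ → ℝ) (β2 τ : ℝ)
    (hpos : ∀ᶠ Δx in nhdsWithin (0:ℝ) (Set.Ioi 0), 0 < β0 Δx ∧ 0 < β1 Δx)
    (hratio : Tendsto (fun Δx => β0 Δx / β1 Δx) (nhdsWithin (0:ℝ) (Set.Ioi 0)) (nhds 1))
    (h0 : Tendsto β0 (nhdsWithin (0:ℝ) (Set.Ioi 0)) (nhds 0))
    (hβ2 : 0 < β2) (hτ : 0 < τ) :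
    let d0 : ℝ := 1/6; let d1 : ℝ := 2/3; let d2 : ℝ := 1/6
    let α0 : ℝ → ℝ := fun Δx => d0 * (1 + (τ / β0 Δx) ^ 2)
    let α1 : ℝ → ℝ := fun Δx => d1 * (1 + (τ / β1 Δx) ^ 2)
    let α2 : ℝ → ℝ := fun Δx => d2 * (1 + (τ / β2) ^ 2)
    Tendsto (fun Δx => α0 Δx / (α0 Δx + α1 Δx + α2 Δx))
        (nhdsWithin (0:ℝ) (Set.Ioi 0)) (nhds (1/5)) ∧
    Tendsto (fun Δx => α1 Δx / (α0 Δx + α1 Δx + α2 Δx))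
        (nhdsWithin (0:ℝ) (Set.Ioi 0)) (nhds (4/5)) ∧
    Tendsto (fun Δx => α2 Δx / (α0 Δx + α1 Δx + α2 Δx))
        (nhdsWithin (0:ℝ) (Set.Ioi 0)) (nhds 0) :=
  stmt_10_general β0 β1 β2 τ hpos hratio h0 hτ
end

section
/- For 0 < a < b and τ > 0, the Z-type ratio satisfies (1 + (τ/b)^2)/(1 + (τ/a)^2) > (a/b)^2; consequently, with d_0 = 1/6, d_1 = 2/3, d_2 = 1/6, if β_0 < β_1 and β_0 < β_2 then d_0 + d_1(β_0/β_1)^2 + d_2(β_0/β_2)^2 < d_0 + d_1·(1+(τ/β_1)^2)/(1+(τ/β_0)^2) + d_2·(1+(τ/β_2)^2)/(1+(τ/β_0)^2) < 1, and hence ω_0^{JS} > ω_0^{ZA} > d_0. -/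
/-! The Z-type ratio `(1 + (τ/b)^2) / (1 + (τ/a)^2)` lies strictly between `(a/b)^2` and `1`,
and the linear weights `1/6, 2/3, 1/6` sum to `1`, so the denominators compare termwise as
`JS < ZA < 1`; since `x ↦ d₀ / x` is decreasing on positive reals this reverses to
`ω^JS > ω^ZA > d₀`. -/

lemma sq_div_lt_div_one_add_sq_div (τ : ℝ) {a b : ℝ} (ha : 0 < a) (hab : a < b) :
    (a / b) ^ 2 < (1 + (τ / b) ^ 2) / (1 + (τ / a) ^ 2) := by
  have hb : 0 < b := ha.trans hab
  have hq : (a / b) ^ 2 < 1 := pow_lt_one₀ (by positivity) ((div_lt_one hb).2 hab) two_ne_zero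
  have hscale : (a / b) ^ 2 * (τ / a) ^ 2 = (τ / b) ^ 2 := by field_simp
  rw [lt_div_iff₀ (by positivity)]
  nlinarith

lemma div_one_add_sq_div_lt_one {τ a b : ℝ} (hτ : 0 < τ) (ha : 0 < a) (hab : a < b) :
    (1 + (τ / b) ^ 2) / (1 + (τ / a) ^ 2) < 1 := by
  have hb : 0 < b := ha.trans hab
  rw [div_lt_one (by positivity), add_lt_add_iff_left]
  exact pow_lt_pow_left₀ (div_lt_div_of_pos_left hτ ha hab) (by positivity) two_ne_zero

theorem stmt_12_general (β0 β1 β2 τ : ℝ) (h0 : 0 < β0)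
    (h01 : β0 < β1) (h02 : β0 < β2) (hτ : 0 < τ) :
    let d0 : ℝ := 1/6; let d1 : ℝ := 2/3; let d2 : ℝ := 1/6
    let ωJS := d0 / (d0 + d1 * (β0 / β1) ^ 2 + d2 * (β0 / β2) ^ 2)
    let ωZA := d0 / (d0 + d1 * ((1 + (τ / β1) ^ 2) / (1 + (τ / β0) ^ 2)) +
        d2 * ((1 + (τ / β2) ^ 2) / (1 + (τ / β0) ^ 2)))
    (∀ a b : ℝ, 0 < a → a < b → (1 + (τ / b) ^ 2) / (1 + (τ / a) ^ 2) > (a / b) ^ 2) ∧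
    d0 + d1 * (β0 / β1) ^ 2 + d2 * (β0 / β2) ^ 2 <
      d0 + d1 * ((1 + (τ / β1) ^ 2) / (1 + (τ / β0) ^ 2)) +
        d2 * ((1 + (τ / β2) ^ 2) / (1 + (τ / β0) ^ 2)) ∧
    d0 + d1 * ((1 + (τ / β1) ^ 2) / (1 + (τ / β0) ^ 2)) +
        d2 * ((1 + (τ / β2) ^ 2) / (1 + (τ / β0) ^ 2)) < 1 ∧
    ωJS > ωZA ∧ ωZA > d0 := by
  intro d0 d1 d2 ωJS ωZA
  have hJS_lt_ZA : d0 + d1 * (β0 / β1) ^ 2 + d2 * (β0 / β2) ^ 2 <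
      d0 + d1 * ((1 + (τ / β1) ^ 2) / (1 + (τ / β0) ^ 2)) +
        d2 * ((1 + (τ / β2) ^ 2) / (1 + (τ / β0) ^ 2)) := by
    gcongr d0 + d1 * ?_ + d2 * ?_
    exacts [sq_div_lt_div_one_add_sq_div τ h0 h01, sq_div_lt_div_one_add_sq_div τ h0 h02]
  have hZA_lt_one : d0 + d1 * ((1 + (τ / β1) ^ 2) / (1 + (τ / β0) ^ 2)) +
      d2 * ((1 + (τ / β2) ^ 2) / (1 + (τ / β0) ^ 2)) < 1 :=
    calc _ < d0 + d1 * 1 + d2 * 1 := by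
          gcongr d0 + d1 * ?_ + d2 * ?_
          exacts [div_one_add_sq_div_lt_one hτ h0 h01, div_one_add_sq_div_lt_one hτ h0 h02]
      _ = 1 := by norm_num [d0, d1, d2]
  have hJS_pos : 0 < d0 + d1 * (β0 / β1) ^ 2 + d2 * (β0 / β2) ^ 2 := by positivity
  refine ⟨fun a b ha hab => sq_div_lt_div_one_add_sq_div τ ha hab, hJS_lt_ZA, hZA_lt_one,
    div_lt_div_of_pos_left (by norm_num) hJS_pos hJS_lt_ZA, ?_⟩
  simpa using div_lt_div_of_pos_left (by norm_num : (0 : ℝ) < d0) (hJS_pos.trans hJS_lt_ZA)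
    hZA_lt_one

theorem stmt_12 (β0 β1 β2 τ : ℝ) (h0 : 0 < β0) (h1 : 0 < β1) (h2 : 0 < β2)
    (h01 : β0 < β1) (h02 : β0 < β2) (hτ : 0 < τ) :
    let d0 : ℝ := 1/6; let d1 : ℝ := 2/3; let d2 : ℝ := 1/6
    let ωJS := d0 / (d0 + d1 * (β0 / β1) ^ 2 + d2 * (β0 / β2) ^ 2)
    let ωZA := d0 / (d0 + d1 * ((1 + (τ / β1) ^ 2) / (1 + (τ / β0) ^ 2)) +
        d2 * ((1 + (τ / β2) ^ 2) / (1 + (τ / β0) ^ 2)))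
    (∀ a b : ℝ, 0 < a → a < b → (1 + (τ / b) ^ 2) / (1 + (τ / a) ^ 2) > (a / b) ^ 2) ∧
    d0 + d1 * (β0 / β1) ^ 2 + d2 * (β0 / β2) ^ 2 <
      d0 + d1 * ((1 + (τ / β1) ^ 2) / (1 + (τ / β0) ^ 2)) +
        d2 * ((1 + (τ / β2) ^ 2) / (1 + (τ / β0) ^ 2)) ∧
    d0 + d1 * ((1 + (τ / β1) ^ 2) / (1 + (τ / β0) ^ 2)) +
        d2 * ((1 + (τ / β2) ^ 2) / (1 + (τ / β0) ^ 2)) < 1 ∧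
    ωJS > ωZA ∧ ωZA > d0 :=
  stmt_12_general β0 β1 β2 τ h0 h01 h02 hτ
end
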